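/- Let ℘ be the Weierstrass function of the elliptic curve E : y² = x³ + a₄x + a₆ (so ℘'' = 6℘² + 2a₄), let L, T, k be positive integers with k^{c₂} > (L+T)² for a suitable absolute constant c₂ > 0, and let N be a prime with √L < N < 2√L. Then for every integer 0 ≤ t ≤ T and all 0 ≤ λ₁, λ₂ ≤ L there exists a polynomial Q_{λ₁,λ₂,t} ∈ O_k[X₁, X₂, X₃, X₄] of partial degree in each variable at most L + 2t, whose coefficients have absolute value at most c₁ k^{c₂ t} (c₁ a constant depending only on E), such that (d^t/dz^t)(℘(z)^{λ₁} ℘(Nz)^{λ₂}) = Q_{λ₁,λ₂,t}(℘(z), ℘'(z), ℘(Nz), ℘'(Nz)) identically in z. -/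

import Mathlib

/-!
Write `x = (℘(z), ℘'(z), ℘(Nz), ℘'(Nz))`. The differential equation `℘'' = 6℘² + 2a₄` and the
chain rule give `x' = V(x)` for the polynomial vector field
`V = (X₁, 6X₀² + 2a₄, N X₃, N (6X₂² + 2a₄))` over `O_k`, so `d/dz (Q(x)) = (D Q)(x)` for the
derivation `D = Σ Vⱼ ∂/∂Xⱼ`, and `Q = Dᵗ(X₀^λ₁ X₂^λ₂)` works. Each application of `D` raises partial
degrees by at most `2` and multiplies the largest coefficient by at most
`(1 + N)(7 + |2a₄|)(L + 2T)`, whose square is `O((L + T)³)` because `N² < 4L`; since `L + T < κ`,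
the `t`-th power of this factor is at most `c₁ κ^{2t}`.
-/

open MvPolynomial

noncomputable section

namespace EllLehmer

/-- The Weierstrass `℘`-function attached to a lattice `Λ ⊆ ℂ`. -/
def wp (Λ : Submodule ℤ ℂ) (z : ℂ) : ℂ :=
  (z ^ 2)⁻¹ + ∑' ω : {ω : Λ // (ω : ℂ) ≠ 0},
    (((z - ((ω : Λ) : ℂ)) ^ 2)⁻¹ - (((ω : Λ) : ℂ) ^ 2)⁻¹)

open scoped PeriodPair

theorem exists_periodPair_lattice_eq (Λ : Submodule ℤ ℂ) [DiscreteTopology Λ]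
    [IsZLattice ℝ Λ] : ∃ P : PeriodPair, P.lattice = Λ := by
  have hrank : Module.finrank ℤ Λ = 2 := by
    rw [ZLattice.rank ℝ Λ, Complex.finrank_real_complex]
  let b := Module.Basis.ofZLatticeBasis ℝ Λ (Module.finBasisOfFinrankEq ℤ Λ hrank)
  have hb : ![b 0, b 1] = b := by ext i; fin_cases i <;> rfl
  let P : PeriodPair := ⟨b 0, b 1, hb ▸ b.linearIndependent⟩
  have hP : P.basis = b := by ext i; fin_cases i <;> simp [P]
  exact ⟨P, by rw [P.lattice_eq_span_range_basis, hP, Module.Basis.ofZLatticeBasis_span]⟩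

theorem wp_eq_weierstrassP (P : PeriodPair) : wp P.lattice = ℘[P] := by
  funext z
  -- Mathlib's `℘[P]` sums over all of `P.lattice`; its `l = 0` term is `1 / z ^ 2` as `1 / 0 = 0`.
  rw [wp, PeriodPair.weierstrassP,
    ← (P.hasSum_weierstrassP z).summable.tsum_subtype_add_tsum_subtype_compl {0},
    tsum_singleton (0 : P.lattice) fun l : P.lattice => 1 / (z - l) ^ 2 - 1 / (l : ℂ) ^ 2]
  let e : {ω : P.lattice // (ω : ℂ) ≠ 0} ≃ (({0} : Set P.lattice)ᶜ : Set P.lattice) :=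
    Equiv.subtypeEquivRight (by simp)
  rw [← e.tsum_eq]
  simp [e, one_div]

section

variable {σ R : Type*} [CommRing R]

theorem mkDerivation_eq_sum_pderiv [Fintype σ] (v : σ → MvPolynomial σ R)
    (p : MvPolynomial σ R) : mkDerivation R v p = ∑ j, v j * pderiv j p := by
  classical
  have sum_apply (q : MvPolynomial σ R) : (∑ j, v j • pderiv j) q = ∑ j, v j * pderiv j q := by
    rw [← Derivation.coeFnAddMonoidHom_apply, map_sum, Finset.sum_apply]
    rfl
  have : mkDerivation R v = ∑ j, v j • pderiv j :=
    derivation_ext fun i => by simp [sum_apply, pderiv_X, Pi.single_apply]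
  rw [this, sum_apply]

theorem degreeOf_pderiv_le (i j : σ) (p : MvPolynomial σ R) :
    degreeOf i (pderiv j p) ≤ degreeOf i p := by
  classical
  refine degreeOf_le_iff.2 fun m hm => ?_
  rw [mem_support_iff, coeff_pderiv] at hm
  have := monomial_le_degreeOf i (mem_support_iff.2 (left_ne_zero_of_mul hm))
  simp only [Finsupp.add_apply] at this
  omega

theorem degreeOf_mkDerivation_le [Fintype σ] {v : σ → MvPolynomial σ R} {i : σ} {e : ℕ}
    (hv : ∀ j, degreeOf i (v j) ≤ e) (p : MvPolynomial σ R) :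
    degreeOf i (mkDerivation R v p) ≤ degreeOf i p + e := by
  rw [mkDerivation_eq_sum_pderiv]
  refine (degreeOf_sum_le _ _ _).trans (Finset.sup_le fun j _ => ?_)
  refine (degreeOf_mul_le _ _ _).trans ?_
  have := degreeOf_pderiv_le i j p
  have := hv j
  omega

theorem degreeOf_X_le_one (i j : σ) : degreeOf i (X j : MvPolynomial σ R) ≤ 1 := by
  classical
  refine degreeOf_le_iff.2 fun m hm => ?_
  rw [X, support_monomial] at hm
  split_ifs at hm
  · simp at hm
  · simp only [Finset.mem_singleton] at hm
    subst hm
    rw [Finsupp.single_apply]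
    split_ifs <;> omega

def CoeffNormLE (φ : R →+* ℂ) (p : MvPolynomial σ R) (β : ℝ) : Prop :=
  ∀ m, ‖φ (coeff m p)‖ ≤ β

namespace CoeffNormLE

variable {φ : R →+* ℂ} {p q : MvPolynomial σ R} {β γ : ℝ}

theorem nonneg (hp : CoeffNormLE φ p β) : 0 ≤ β :=
  (norm_nonneg _).trans (hp 0)

theorem mono (hp : CoeffNormLE φ p β) (h : β ≤ γ) : CoeffNormLE φ p γ :=
  fun m => (hp m).trans h

theorem add (hp : CoeffNormLE φ p β) (hq : CoeffNormLE φ q γ) :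
    CoeffNormLE φ (p + q) (β + γ) := fun m => by
  rw [coeff_add, map_add]
  exact (norm_add_le _ _).trans (add_le_add (hp m) (hq m))

theorem C_mul (hp : CoeffNormLE φ p β) (a : R) : CoeffNormLE φ (C a * p) (‖φ a‖ * β) :=
  fun m => by
    rw [coeff_C_mul, map_mul, norm_mul]
    exact mul_le_mul_of_nonneg_left (hp m) (norm_nonneg _)

theorem X_mul (hp : CoeffNormLE φ p β) (i : σ) : CoeffNormLE φ (X i * p) β := fun m => by
  classical
  rw [coeff_X_mul']
  split_ifs
  · exact hp _
  · simpa using hp.nonneg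

theorem pderiv (hp : CoeffNormLE φ p β) {i : σ} {G : ℕ} (hG : degreeOf i p ≤ G) :
    CoeffNormLE φ (pderiv i p) (G * β) := fun m => by
  rw [coeff_pderiv, map_mul, norm_mul, mul_comm]
  by_cases h : coeff (m + Finsupp.single i 1) p = 0
  · simpa [h] using mul_nonneg (Nat.cast_nonneg G) hp.nonneg
  have hdeg := (monomial_le_degreeOf i (mem_support_iff.2 h)).trans hG
  simp only [Finsupp.add_apply, Finsupp.single_eq_same] at hdeg
  refine mul_le_mul ?_ (hp _) (norm_nonneg _) (Nat.cast_nonneg G)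
  rw [← Nat.cast_succ, map_natCast, Complex.norm_natCast]
  exact_mod_cast hdeg

theorem monomial_one (s : σ →₀ ℕ) : CoeffNormLE φ (monomial s (1 : R)) 1 := fun m => by
  classical
  rw [coeff_monomial]
  split_ifs <;> simp

end CoeffNormLE

section

variable (φ : R →+* ℂ) (v : σ → MvPolynomial σ R) {x : ℂ → σ → ℂ}

theorem hasDerivAt_eval₂_mkDerivation {z : ℂ}
    (hx : ∀ i, HasDerivAt (fun w => x w i) (eval₂ φ (x z) (v i)) z) (p : MvPolynomial σ R) :
    HasDerivAt (fun w => eval₂ φ (x w) p) (eval₂ φ (x z) (mkDerivation R v p)) z := by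
  induction p using MvPolynomial.induction_on with
  | C a => simpa [derivation_C] using hasDerivAt_const z (φ a)
  | add p q hp hq => simpa only [eval₂_add, map_add] using hp.fun_add hq
  | mul_X p i hp =>
    simp only [eval₂_mul, eval₂_X, Derivation.leibniz, smul_eq_mul, eval₂_add, mkDerivation_X]
    exact (hp.mul (hx i)).congr_deriv (by ring)

theorem iteratedDeriv_eval₂_eq_eval₂_iterate_mkDerivation {U : Set ℂ} (hU : IsOpen U)
    (hx : ∀ z ∈ U, ∀ i, HasDerivAt (fun w => x w i) (eval₂ φ (x z) (v i)) z)
    (p : MvPolynomial σ R) (t : ℕ) {z : ℂ} (hz : z ∈ U) :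
    iteratedDeriv t (fun w => eval₂ φ (x w) p) z =
      eval₂ φ (x z) ((mkDerivation R v)^[t] p) := by
  induction t generalizing z with
  | zero => simp
  | succ t ih =>
    have hev : iteratedDeriv t (fun w => eval₂ φ (x w) p) =ᶠ[nhds z]
        fun w => eval₂ φ (x w) ((mkDerivation R v)^[t] p) :=
      Filter.eventually_of_mem (hU.mem_nhds hz) fun w hw => ih hw
    rw [iteratedDeriv_succ, hev.deriv_eq, Function.iterate_succ_apply']
    exact (hasDerivAt_eval₂_mkDerivation φ v (hx z hz) _).deriv

end

end

section

variable {R : Type*} [CommRing R]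

def weierstrassField (a : R) (n : ℕ) : Fin 4 → MvPolynomial (Fin 4) R :=
  ![X 1, C 6 * X 0 ^ 2 + C (2 * a), C (n : R) * X 3, C (n : R) * (C 6 * X 2 ^ 2 + C (2 * a))]

theorem degreeOf_weierstrassField_le (a : R) (n : ℕ) (i j : Fin 4) :
    degreeOf i (weierstrassField a n j) ≤ 2 := by
  have hX (l : Fin 4) := degreeOf_X_le_one (R := R) i l
  have hquad (l : Fin 4) : degreeOf i (C 6 * X l ^ 2 + C (2 * a) : MvPolynomial (Fin 4) R) ≤ 2 := by
    refine (degreeOf_add_le _ _ _).trans (max_le ?_ ((degreeOf_C _ _).trans_le (Nat.zero_le 2)))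
    refine (degreeOf_C_mul_le _ _ _).trans ((degreeOf_pow_le _ _ _).trans ?_)
    have := hX l
    omega
  fin_cases j
  · exact (hX 1).trans one_le_two
  · exact hquad 0
  · exact (degreeOf_C_mul_le _ _ _).trans ((hX 3).trans one_le_two)
  · exact (degreeOf_C_mul_le _ _ _).trans (hquad 2)

theorem degreeOf_iterate_mkDerivation_weierstrassField_le (a : R) (n : ℕ)
    {p : MvPolynomial (Fin 4) R} {d : ℕ} (hp : ∀ i, degreeOf i p ≤ d) (t : ℕ) (i : Fin 4) :
    degreeOf i ((mkDerivation R (weierstrassField a n))^[t] p) ≤ d + 2 * t := by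
  induction t generalizing i with
  | zero => exact hp i
  | succ t ih =>
    rw [Function.iterate_succ_apply']
    have := degreeOf_mkDerivation_le (degreeOf_weierstrassField_le a n i)
      ((mkDerivation R (weierstrassField a n))^[t] p)
    have := ih i
    omega

theorem coeffNormLE_mkDerivation_weierstrassField {φ : R →+* ℂ} {a : R} {n : ℕ}
    {p : MvPolynomial (Fin 4) R} {β : ℝ} {G : ℕ} (hp : CoeffNormLE φ p β)
    (hG : ∀ j, degreeOf j p ≤ G) :
    CoeffNormLE φ (mkDerivation R (weierstrassField a n) p)
      ((1 + n) * (7 + ‖φ (2 * a)‖) * (G * β)) := by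
  have hD (j : Fin 4) : CoeffNormLE φ (pderiv j p) (G * β) := hp.pderiv (hG j)
  have expand : mkDerivation R (weierstrassField a n) p =
      X 1 * pderiv 0 p + (C 6 * (X 0 * (X 0 * pderiv 1 p)) + C (2 * a) * pderiv 1 p) +
        C (n : R) * (X 3 * pderiv 2 p) +
        C (n : R) * (C 6 * (X 2 * (X 2 * pderiv 3 p)) + C (2 * a) * pderiv 3 p) := by
    rw [mkDerivation_eq_sum_pderiv, Fin.sum_univ_four]
    simp only [weierstrassField, Matrix.cons_val]
    ring
  rw [expand]
  have h0 := (hD 0).X_mul 1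
  have h1 := ((((hD 1).X_mul 0).X_mul 0).C_mul 6).add ((hD 1).C_mul (2 * a))
  have h2 := ((hD 2).X_mul 3).C_mul (n : R)
  have h3 := (((((hD 3).X_mul 2).X_mul 2).C_mul 6).add ((hD 3).C_mul (2 * a))).C_mul (n : R)
  refine (((h0.add h1).add h2).add h3).mono (le_of_eq ?_)
  rw [map_ofNat, map_natCast, Complex.norm_natCast, Complex.norm_ofNat]
  ring

theorem coeffNormLE_iterate_mkDerivation_weierstrassField {φ : R →+* ℂ} {a : R} {n : ℕ}
    {p : MvPolynomial (Fin 4) R} {d G t : ℕ} (hp : CoeffNormLE φ p 1)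
    (hdeg : ∀ i, degreeOf i p ≤ d) (ht : d + 2 * t ≤ G) :
    CoeffNormLE φ ((mkDerivation R (weierstrassField a n))^[t] p)
      (((1 + n) * (7 + ‖φ (2 * a)‖) * G) ^ t) := by
  induction t with
  | zero => simpa using hp
  | succ t ih =>
    rw [Function.iterate_succ_apply']
    refine (coeffNormLE_mkDerivation_weierstrassField (G := G) (ih (by omega)) fun j =>
      (degreeOf_iterate_mkDerivation_weierstrassField_le a n hdeg t j).trans (by omega)).mono
      (le_of_eq (by ring))

theorem hasDerivAt_deriv_of_analyticOnNhd {f : ℂ → ℂ} {U : Set ℂ} (hf : AnalyticOnNhd ℂ f U)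
    {z : ℂ} (hz : z ∈ U) : HasDerivAt (deriv f) (iteratedDeriv 2 f z) z := by
  rw [iteratedDeriv_succ, iteratedDeriv_one]
  exact (hf.deriv z hz).differentiableAt.hasDerivAt

theorem hasDerivAt_weierstrassField (φ : R →+* ℂ) {a : R} {f : ℂ → ℂ} {U : Set ℂ}
    (hf : AnalyticOnNhd ℂ f U) (hode : ∀ z ∈ U, iteratedDeriv 2 f z = 6 * f z ^ 2 + 2 * φ a)
    (n : ℕ) {z : ℂ} (hz : z ∈ U) (hnz : (n : ℂ) * z ∈ U) (i : Fin 4) :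
    HasDerivAt (fun w => ![f w, deriv f w, f (n * w), deriv f (n * w)] i)
      (eval₂ φ ![f z, deriv f z, f (n * z), deriv f (n * z)] (weierstrassField a n i)) z := by
  have hmul := hasDerivAt_const_mul (x := z) (n : ℂ)
  fin_cases i
  · simpa [weierstrassField] using (hf z hz).differentiableAt.hasDerivAt
  · simpa [weierstrassField, hode z hz, map_ofNat] using hasDerivAt_deriv_of_analyticOnNhd hf hz
  · simpa [weierstrassField, Function.comp_def, mul_comm] using
      (hf _ hnz).differentiableAt.hasDerivAt.comp z hmul
  · have := (hasDerivAt_deriv_of_analyticOnNhd hf hnz).comp z hmul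
    rw [hode _ hnz] at this
    simpa [weierstrassField, Function.comp_def, map_ofNat, mul_comm] using this

theorem iteratedDeriv_pow_mul_pow_eq_eval₂ (φ : R →+* ℂ) {a : R} {f : ℂ → ℂ} {U : Set ℂ}
    (hU : IsOpen U) (hf : AnalyticOnNhd ℂ f U)
    (hode : ∀ z ∈ U, iteratedDeriv 2 f z = 6 * f z ^ 2 + 2 * φ a)
    (n l₁ l₂ t : ℕ) {z : ℂ} (hz : z ∈ U) (hnz : (n : ℂ) * z ∈ U) :
    iteratedDeriv t (fun w => f w ^ l₁ * f (n * w) ^ l₂) z =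
      eval₂ φ ![f z, deriv f z, f (n * z), deriv f (n * z)]
        ((mkDerivation R (weierstrassField a n))^[t] (X 0 ^ l₁ * X 2 ^ l₂)) := by
  have hU' : IsOpen (U ∩ (fun w : ℂ => (n : ℂ) * w) ⁻¹' U) :=
    hU.inter (hU.preimage (continuous_const_mul _))
  have := iteratedDeriv_eval₂_eq_eval₂_iterate_mkDerivation φ (weierstrassField a n) hU'
    (fun w hw => hasDerivAt_weierstrassField φ hf hode n hw.1 hw.2) (X 0 ^ l₁ * X 2 ^ l₂) t
    ⟨hz, hnz⟩
  simpa using this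

end

theorem pow_le_pow_ceil_mul_pow {C x : ℝ} {t : ℕ} (hC : 1 ≤ C) (hx : 1 ≤ x) (ht : (t : ℝ) < x) :
    C ^ t ≤ C ^ ⌈C⌉₊ * x ^ t := by
  rcases le_or_gt C x with hCx | hxC
  · calc C ^ t ≤ x ^ t := pow_le_pow_left₀ (by linarith) hCx t
      _ ≤ C ^ ⌈C⌉₊ * x ^ t := le_mul_of_one_le_left (by positivity) (one_le_pow₀ hC)
  · have htC : t ≤ ⌈C⌉₊ := by exact_mod_cast (ht.trans hxC).le.trans (Nat.le_ceil C)
    calc C ^ t ≤ C ^ ⌈C⌉₊ := pow_le_pow_right₀ hC htC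
      _ ≤ C ^ ⌈C⌉₊ * x ^ t := le_mul_of_one_le_right (by positivity) (one_le_pow₀ hx)

theorem pow_le_of_sq_le_mul_pow_three {B K x y : ℝ} {t : ℕ} (hB : 0 ≤ B) (hK : 1 ≤ K)
    (hy : 0 ≤ y) (hBy : B ^ 2 ≤ K * y ^ 3) (hty : (t : ℝ) ≤ y) (hyx : y < x) (hx : 1 ≤ x) :
    B ^ t ≤ K ^ ⌈K⌉₊ * (x ^ 2) ^ t := by
  have hc : 1 ≤ K ^ ⌈K⌉₊ := one_le_pow₀ hK
  refine (pow_le_pow_iff_left₀ (by positivity) (by positivity) two_ne_zero).1 ?_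
  calc (B ^ t) ^ 2 = (B ^ 2) ^ t := by ring
    _ ≤ (K * y ^ 3) ^ t := pow_le_pow_left₀ (by positivity) hBy t
    _ = K ^ t * (y ^ 3) ^ t := mul_pow _ _ _
    _ ≤ (K ^ ⌈K⌉₊ * x ^ t) * (x ^ 3) ^ t := by
        gcongr
        exact pow_le_pow_ceil_mul_pow hK hx (hty.trans_lt hyx)
    _ = K ^ ⌈K⌉₊ * ((x ^ 2) ^ t) ^ 2 := by ring
    _ ≤ (K ^ ⌈K⌉₊ * (x ^ 2) ^ t) ^ 2 := by
        rw [mul_pow]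
        gcongr
        nlinarith

theorem sq_one_add_mul_le_of_lt_two_sqrt {N L T : ℕ} (hN₁ : 1 ≤ N) (hN : (N : ℝ) < 2 * √L) :
    ((1 + (N : ℝ)) * ↑(L + 2 * T)) ^ 2 ≤ 64 * ((L : ℝ) + T) ^ 3 := by
  have hN₁' : (1 : ℝ) ≤ N := by exact_mod_cast hN₁
  have hNsq : (N : ℝ) ^ 2 < 4 * L := by
    have := pow_lt_pow_left₀ hN (by positivity) two_ne_zero
    rw [mul_pow, Real.sq_sqrt (Nat.cast_nonneg L)] at this
    linarith
  have hT : (0 : ℝ) ≤ T := Nat.cast_nonneg T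
  have h1 : ((1 : ℝ) + N) ^ 2 ≤ 16 * (L + T) := by nlinarith
  have h2 : ((L : ℝ) + 2 * T) ^ 2 ≤ 4 * (L + T) ^ 2 := by nlinarith
  push_cast
  calc ((1 + (N : ℝ)) * (L + 2 * T)) ^ 2 = (1 + N) ^ 2 * (L + 2 * T) ^ 2 := by ring
    _ ≤ (16 * ((L : ℝ) + T)) * (4 * ((L : ℝ) + T) ^ 2) := by gcongr
    _ = 64 * ((L : ℝ) + T) ^ 3 := by ring

theorem one_add_mul_mul_pow_le_of_lt_two_sqrt {A : ℝ} (hA : 1 ≤ A) {N L T κ t : ℕ}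
    (hN₁ : 1 ≤ N) (hN : (N : ℝ) < 2 * √L) (hLT : (L : ℝ) + T < κ) (ht : t ≤ T) :
    ((1 + N) * A * ↑(L + 2 * T)) ^ t ≤ (64 * A ^ 2) ^ ⌈64 * A ^ 2⌉₊ * ((κ : ℝ) ^ 2) ^ t := by
  have hκ : (1 : ℝ) ≤ κ := by
    exact_mod_cast Nat.one_le_iff_ne_zero.2 fun h => by simp [h] at hLT; linarith
  refine pow_le_of_sq_le_mul_pow_three (by positivity) (by nlinarith) (by positivity) ?_
    (by exact_mod_cast ht.trans (Nat.le_add_left T L)) hLT hκ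
  calc ((1 + N) * A * ↑(L + 2 * T)) ^ 2 = A ^ 2 * ((1 + (N : ℝ)) * ↑(L + 2 * T)) ^ 2 := by ring
    _ ≤ A ^ 2 * (64 * ((L : ℝ) + T) ^ 3) := by
        gcongr
        exact sq_one_add_mul_le_of_lt_two_sqrt hN₁ hN
    _ = 64 * A ^ 2 * ((L : ℝ) + T) ^ 3 := by ring

/-- **Lemma (derivatives of the auxiliary monomials are polynomials with controlled
coefficients).** There is an absolute constant `c₂ > 0` such that: for every CM elliptic
curve `y² = x³ + a₄x + a₆` with complex multiplication by the ring of integers `𝓞 k` of an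
imaginary quadratic field `k` (with Weierstrass function `℘ = wp Λ`, satisfying
`℘'' = 6℘² + 2a₄`), there is `c₁ > 0` depending only on the curve such that for all positive
integers `L, T, κ` with `κ ^ c₂ > (L + T)²` and every prime `N` with `√L < N < 2√L`, every
`t ≤ T` and all `λ₁, λ₂ ≤ L`, there is a polynomial `Q ∈ 𝓞 k[X₁, X₂, X₃, X₄]` of partial
degrees at most `L + 2t`, with coefficients of absolute value at most `c₁ κ^(c₂ t)`, with
`(d/dz)^t (℘(z)^λ₁ ℘(Nz)^λ₂) = Q(℘(z), ℘'(z), ℘(Nz), ℘'(Nz))`. -/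
theorem iteratedDeriv_monomial_eq_polynomial :
    ∃ c₂ : ℝ, 0 < c₂ ∧
      ∀ (k : Type) [Field k] [NumberField k],
        Module.finrank ℚ k = 2 → IsEmpty (k →+* ℝ) →
        ∀ (ι : k →+* ℂ) (Λ : Submodule ℤ ℂ) (_ : DiscreteTopology Λ) (_ : IsZLattice ℝ Λ)
          (a₄ a₆ : NumberField.RingOfIntegers k),
        -- `Λ` is stable under `𝓞 k`: complex multiplication by `𝓞 k`
        (∀ α : NumberField.RingOfIntegers k, ∀ ω ∈ Λ,
          ι (algebraMap (NumberField.RingOfIntegers k) k α) * ω ∈ Λ) →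
        -- `℘` is the Weierstrass function of `E : y² = x³ + a₄x + a₆`, so `℘'' = 6℘² + 2a₄`
        (∀ z : ℂ, z ∉ Λ → iteratedDeriv 2 (wp Λ) z =
          6 * wp Λ z ^ 2 + 2 * ι (algebraMap (NumberField.RingOfIntegers k) k a₄)) →
        ∃ c₁ : ℝ, 0 < c₁ ∧
          ∀ L T κ : ℕ, 0 < L → 0 < T → 0 < κ →
            ((L : ℝ) + T) ^ 2 < (κ : ℝ) ^ c₂ →
            ∀ N : ℕ, N.Prime → Real.sqrt L < N → (N : ℝ) < 2 * Real.sqrt L →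
            ∀ t : ℕ, t ≤ T → ∀ l₁ l₂ : ℕ, l₁ ≤ L → l₂ ≤ L →
              ∃ Q : MvPolynomial (Fin 4) (NumberField.RingOfIntegers k),
                (∀ i : Fin 4, Q.degreeOf i ≤ L + 2 * t) ∧
                (∀ m : Fin 4 →₀ ℕ, ‖
                    (ι (algebraMap (NumberField.RingOfIntegers k) k (MvPolynomial.coeff m Q)))‖
                  ≤ c₁ * (κ : ℝ) ^ (c₂ * t)) ∧
                ∀ z : ℂ, z ∉ Λ → (N : ℂ) * z ∉ Λ →
                  iteratedDeriv t (fun w => wp Λ w ^ l₁ * wp Λ ((N : ℂ) * w) ^ l₂) z =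
                    MvPolynomial.eval₂
                      ((ι.comp (algebraMap (NumberField.RingOfIntegers k) k)))
                      ![wp Λ z, deriv (wp Λ) z, wp Λ ((N : ℂ) * z), deriv (wp Λ) ((N : ℂ) * z)]
                      Q := by
  refine ⟨2, two_pos, ?_⟩
  intro k _ _ _ _ ι Λ _ _ a₄ _ _ hode
  obtain ⟨P, rfl⟩ := exists_periodPair_lattice_eq Λ
  rw [wp_eq_weierstrassP] at hode ⊢
  set φ := ι.comp (algebraMap (NumberField.RingOfIntegers k) k)
  set A : ℝ := 7 + ‖φ (2 * a₄)‖
  have hA : 1 ≤ A := by linarith [norm_nonneg (φ (2 * a₄))]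
  refine ⟨(64 * A ^ 2) ^ ⌈64 * A ^ 2⌉₊, by positivity, ?_⟩
  intro L T κ _ _ _ hLTκ N _ hNL hN t ht l₁ l₂ hl₁ hl₂
  have hN₁ : 1 ≤ N := Nat.cast_pos.1 ((Real.sqrt_nonneg L).trans_lt hNL)
  have hLT : (L : ℝ) + T < κ := by
    rw [Real.rpow_two] at hLTκ
    exact lt_of_pow_lt_pow_left₀ 2 (Nat.cast_nonneg κ) hLTκ
  have hdeg₀ (i : Fin 4) :
      degreeOf i (X 0 ^ l₁ * X 2 ^ l₂ : MvPolynomial (Fin 4) (NumberField.RingOfIntegers k)) ≤ L :=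
    (degreeOf_mul_le _ _ _).trans (by fin_cases i <;> simp [degreeOf_X_pow_of_ne, hl₁, hl₂])
  have hcoeff₀ : CoeffNormLE φ (X 0 ^ l₁ * X 2 ^ l₂ : MvPolynomial (Fin 4) _) 1 := by
    simpa [X_pow_eq_monomial, monomial_mul] using
      CoeffNormLE.monomial_one (φ := φ) (Finsupp.single 0 l₁ + Finsupp.single 2 l₂)
  refine ⟨(mkDerivation _ (weierstrassField a₄ N))^[t] (X 0 ^ l₁ * X 2 ^ l₂),
    degreeOf_iterate_mkDerivation_weierstrassField_le a₄ N hdeg₀ t, fun m => ?_,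
    fun z hz hNz => iteratedDeriv_pow_mul_pow_eq_eval₂ φ P.isClosed_lattice.isOpen_compl
      P.analyticOnNhd_weierstrassP hode N l₁ l₂ t hz hNz⟩
  refine (coeffNormLE_iterate_mkDerivation_weierstrassField hcoeff₀ hdeg₀
    (G := L + 2 * T) (t := t) (by omega) m).trans ?_
  rw [Real.rpow_mul (Nat.cast_nonneg κ), Real.rpow_two, Real.rpow_natCast]
  exact one_add_mul_mul_pow_le_of_lt_two_sqrt hA hN₁ hN hLT ht

end EllLehmer
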